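/- (Contact-count entropy criterion for rank collapse.) Let, for each n ≥ 2, scores z_{n,1},…,z_{n,n} be given with N_n(0) = 1 and Λ_n < ∞ for all sufficiently large n, with contact gap Δ_n, and let (β_n) be a positive sequence with β_n/Λ_n → 0. If the contact-count entropy C_n := Λ_n Δ_n = log N_n(Δ_n) satisfies C_n → ∞, then G_n(β_n) := max_{i,j} |p_{n,i}(β_n) − p_{n,j}(β_n)| → 0, i.e. rank collapse holds. -/
import Mathlib


open Filter MeasureTheory
open scoped ENNReal

/-- Maximum score `z_n^*`. -/
noncomputable def zmax (n : ℕ) (z : Fin n → ℝ) : ℝ := sSup (Set.range z)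

/-- Gap `g_{n,j} = z_n^* - z_{n,j}`. -/
noncomputable def gap (n : ℕ) (z : Fin n → ℝ) (j : Fin n) : ℝ := zmax n z - z j

/-- Cumulative gap-counting function `N_n(t)`. -/
noncomputable def Ncount (n : ℕ) (z : Fin n → ℝ) (t : ℝ) : ℕ :=
  {j : Fin n | gap n z j ≤ t}.ncard

/-- Normalised partition function `Z_n(β)`. -/
noncomputable def Zfun (n : ℕ) (z : Fin n → ℝ) (β : ℝ) : ℝ :=
  ∑ j : Fin n, Real.exp (-(β * gap n z j))

/-- Softmax probabilities `p_{n,j}(β)`. -/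
noncomputable def softmaxP (n : ℕ) (z : Fin n → ℝ) (β : ℝ) (j : Fin n) : ℝ :=
  Real.exp (β * z j) / ∑ ℓ : Fin n, Real.exp (β * z ℓ)

/-- Shannon entropy `H_n(β)`. -/
noncomputable def entropyH (n : ℕ) (z : Fin n → ℝ) (β : ℝ) : ℝ :=
  -∑ j : Fin n, softmaxP n z β j * Real.log (softmaxP n z β j)

/-- The set of values `log N_n(t) / t` over `t > 0`, whose supremum is `Λ_n`. -/
def lamSet (n : ℕ) (z : Fin n → ℝ) : Set ℝ :=
  {r | ∃ t : ℝ, 0 < t ∧ r = Real.log (Ncount n z t) / t}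

/-- Second-largest entry of a finite vector (equals the largest in case of ties). -/
noncomputable def secondLargest (n : ℕ) (v : Fin n → ℝ) : ℝ :=
  sInf (Set.range fun i => sSup (v '' {j | j ≠ i}))

/-- Top-two weight gap `D_n(β)`. -/
noncomputable def Dgap (n : ℕ) (z : Fin n → ℝ) (β : ℝ) : ℝ :=
  sSup (Set.range (softmaxP n z β)) - secondLargest n (softmaxP n z β)

/-- Rank gap `G_n(β) = max_{i,j} |p_{n,i}(β) - p_{n,j}(β)|`. -/
noncomputable def Ggap (n : ℕ) (z : Fin n → ℝ) (β : ℝ) : ℝ :=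
  sSup {x | ∃ i j : Fin n, x = |softmaxP n z β i - softmaxP n z β j|}

/-- Resolved accumulation scale `Λ_n^{(r)}` (with `sup ∅ = 0`), valued in `ℝ≥0∞`. -/
noncomputable def resolvedLam (n : ℕ) (z : Fin n → ℝ) (r : ℝ) : ℝ≥0∞ :=
  ⨆ t ∈ {t : ℝ | 0 < t ∧ r < Real.log (Ncount n z t)},
    ENNReal.ofReal ((Real.log (Ncount n z t) - r) / t)

/-- Laplace envelope `S_n(β) = sup_{t ≥ 0} (log N_n(t) - β t)`. -/
noncomputable def Sfun (n : ℕ) (z : Fin n → ℝ) (β : ℝ) : ℝ :=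
  sSup {x | ∃ t : ℝ, 0 ≤ t ∧ x = Real.log (Ncount n z t) - β * t}

/-- Rank boundary `B_n^rank(r) = sup {β ≥ 0 : log Z_n(β) ≥ r}`, valued in `ℝ≥0∞`. -/
noncomputable def rankBoundary (n : ℕ) (z : Fin n → ℝ) (r : ℝ) : ℝ≥0∞ :=
  ⨆ β ∈ {β : ℝ | 0 ≤ β ∧ r ≤ Real.log (Zfun n z β)}, ENNReal.ofReal β

/-- `X_n ≍ (log n)^ξ`. -/
def IsLogAsymp (X : ℕ → ℝ) (ξ : ℝ) : Prop :=
  ∃ c₁ c₂ : ℝ, 0 < c₁ ∧ c₁ ≤ c₂ ∧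
    ∀ᶠ n : ℕ in Filter.atTop,
      c₁ * Real.log n ^ ξ ≤ X n ∧ X n ≤ c₂ * Real.log n ^ ξ

lemma gap_nonneg' {n : ℕ} (z : Fin n → ℝ) (j : Fin n) : 0 ≤ gap n z j := by
  have : z j ≤ zmax n z := le_csSup (Set.finite_range z).bddAbove ⟨j, rfl⟩
  simpa [gap] using this

lemma Zfun_pos' {n : ℕ} (z : Fin n → ℝ) (β : ℝ) (j0 : Fin n) : 0 < Zfun n z β :=
  Finset.sum_pos (fun j _ => Real.exp_pos _) ⟨j0, Finset.mem_univ _⟩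

lemma softmax_le' {n : ℕ} (z : Fin n → ℝ) {β : ℝ} (hβ : 0 ≤ β) (j j0 : Fin n) :
    softmaxP n z β j ≤ 1 / Zfun n z β := by
  have hZ : 0 < Zfun n z β := Zfun_pos' z β j0
  have hden : ∑ ℓ : Fin n, Real.exp (β * z ℓ) = Real.exp (β * zmax n z) * Zfun n z β := by
    rw [Zfun, Finset.mul_sum]
    refine Finset.sum_congr rfl fun ℓ _ => ?_
    rw [← Real.exp_add]
    congr 1
    simp [gap]; ring
  have hnum : Real.exp (β * z j) ≤ Real.exp (β * zmax n z) := by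
    apply Real.exp_le_exp.mpr
    have h1 : z j ≤ zmax n z := le_csSup (Set.finite_range z).bddAbove ⟨j, rfl⟩
    exact mul_le_mul_of_nonneg_left h1 hβ
  rw [softmaxP, hden]
  rw [div_le_div_iff₀ (by positivity) hZ]
  calc Real.exp (β * z j) * Zfun n z β ≤ Real.exp (β * zmax n z) * Zfun n z β :=
        mul_le_mul_of_nonneg_right hnum hZ.le
    _ = 1 * (Real.exp (β * zmax n z) * Zfun n z β) := by ring

lemma softmax_nonneg' {n : ℕ} (z : Fin n → ℝ) (β : ℝ) (j : Fin n) :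
    0 ≤ softmaxP n z β j := by
  apply div_nonneg (Real.exp_pos _).le
  exact Finset.sum_nonneg fun ℓ _ => (Real.exp_pos _).le

lemma Zfun_ge' {n : ℕ} (z : Fin n → ℝ) {β t : ℝ} (hβ : 0 ≤ β) :
    (Ncount n z t : ℝ) * Real.exp (-(β * t)) ≤ Zfun n z β := by
  classical
  have hcard : Ncount n z t = ({j : Fin n | gap n z j ≤ t}.toFinset).card := by
    rw [Ncount, Set.ncard_eq_toFinset_card']
  rw [hcard, Zfun]
  calc (({j : Fin n | gap n z j ≤ t}.toFinset).card : ℝ) * Real.exp (-(β * t))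
      = ∑ _j ∈ {j : Fin n | gap n z j ≤ t}.toFinset, Real.exp (-(β * t)) := by
        rw [Finset.sum_const, nsmul_eq_mul]
    _ ≤ ∑ j ∈ {j : Fin n | gap n z j ≤ t}.toFinset, Real.exp (-(β * gap n z j)) := by
        apply Finset.sum_le_sum
        intro j hj
        apply Real.exp_le_exp.mpr
        have hjt : gap n z j ≤ t := by simpa using hj
        have := mul_le_mul_of_nonneg_left hjt hβ
        linarith
    _ ≤ ∑ j : Fin n, Real.exp (-(β * gap n z j)) :=
        Finset.sum_le_sum_of_subset_of_nonneg (Finset.subset_univ _)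
          (fun _ _ _ => (Real.exp_pos _).le)

theorem stmt16 (z : (n : ℕ) → Fin n → ℝ) (Λ Δ β : ℕ → ℝ)
    (hβ : ∀ n, 0 < β n)
    (hev : ∀ᶠ n in atTop, Ncount n (z n) 0 = 1 ∧ IsLUB (lamSet n (z n)) (Λ n) ∧
      0 < Δ n ∧ (∃ j : Fin n, gap n (z n) j = Δ n) ∧
      Real.log (Ncount n (z n) (Δ n)) / Δ n = Λ n ∧
      ∀ u : ℝ, 0 < u → (∃ j : Fin n, gap n (z n) j = u) →
        Real.log (Ncount n (z n) u) / u = Λ n → u ≤ Δ n)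
    (hsub : Tendsto (fun n => β n / Λ n) atTop (nhds 0))
    (hC : Tendsto (fun n => Λ n * Δ n) atTop atTop) :
    Tendsto (fun n => Ggap n (z n) (β n)) atTop (nhds 0) := by
  have h2 := hC.eventually_gt_atTop 0
  have h3 : ∀ᶠ n in atTop, β n / Λ n < 1 / 2 :=
    hsub.eventually (gt_mem_nhds (by norm_num))
  have key : ∀ᶠ n in atTop, 0 ≤ Ggap n (z n) (β n) ∧
      Ggap n (z n) (β n) ≤ Real.exp (-(Λ n * Δ n) / 2) := by
    filter_upwards [hev, h2, h3] with n hn hpos hhalf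
    obtain ⟨hN0, hlub, hΔpos, ⟨j0, hj0⟩, hcontact, _⟩ := hn
    have hΛ : 0 < Λ n := by nlinarith
    have hβΛ : β n ≤ Λ n / 2 := by
      have := (div_lt_iff₀ hΛ).mp hhalf
      linarith
    have hZ : 0 < Zfun n (z n) (β n) := Zfun_pos' (z n) (β n) j0
    -- N(Δ) = exp(Λ Δ)
    have hNpos : 0 < Ncount n (z n) (Δ n) := by
      rw [Ncount]
      refine (Set.ncard_pos (Set.toFinite _)).mpr ⟨j0, ?_⟩
      simp [hj0]
    have hlogN : Real.log (Ncount n (z n) (Δ n)) = Λ n * Δ n := by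
      field_simp at hcontact
      linarith [hcontact]
    have hNeq : (Ncount n (z n) (Δ n) : ℝ) = Real.exp (Λ n * Δ n) := by
      rw [← hlogN, Real.exp_log (by exact_mod_cast hNpos)]
    -- Z lower bound
    have hZge : Real.exp (Λ n * Δ n / 2) ≤ Zfun n (z n) (β n) := by
      have h1 := Zfun_ge' (z n) (t := Δ n) (hβ n).le
      rw [hNeq, ← Real.exp_add] at h1
      refine le_trans ?_ h1
      apply Real.exp_le_exp.mpr
      nlinarith
    -- softmax probabilities bounded by 1/Z
    have hple : ∀ j : Fin n, softmaxP n (z n) (β n) j ≤ 1 / Zfun n (z n) (β n) :=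
      fun j => softmax_le' (z n) (hβ n).le j j0
    have hbound : ∀ x ∈ {x | ∃ i j : Fin n,
        x = |softmaxP n (z n) (β n) i - softmaxP n (z n) (β n) j|},
        x ≤ 1 / Zfun n (z n) (β n) := by
      rintro x ⟨i, j, rfl⟩
      rw [abs_sub_le_iff]
      constructor
      · linarith [hple i, softmax_nonneg' (z n) (β n) j]
      · linarith [hple j, softmax_nonneg' (z n) (β n) i]
    have hmem : (0 : ℝ) ∈ {x | ∃ i j : Fin n,
        x = |softmaxP n (z n) (β n) i - softmaxP n (z n) (β n) j|} :=
      ⟨j0, j0, by simp⟩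
    constructor
    · exact le_csSup ⟨1 / Zfun n (z n) (β n), hbound⟩ hmem
    · refine le_trans (csSup_le ⟨0, hmem⟩ hbound) ?_
      have h1 : 1 / Zfun n (z n) (β n) ≤ 1 / Real.exp (Λ n * Δ n / 2) :=
        one_div_le_one_div_of_le (Real.exp_pos _) hZge
      refine h1.trans (le_of_eq ?_)
      rw [one_div, ← Real.exp_neg]
      congr 1
      ring
  have hlim : Tendsto (fun n => Real.exp (-(Λ n * Δ n) / 2)) atTop (nhds 0) := by
    have h1 : Tendsto (fun n => -(Λ n * Δ n) / 2) atTop atBot := by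
      apply Tendsto.atBot_div_const (by norm_num : (0:ℝ) < 2)
      exact tendsto_neg_atTop_atBot.comp hC
    exact Real.tendsto_exp_atBot.comp h1
  exact tendsto_of_tendsto_of_tendsto_of_le_of_le'
    tendsto_const_nhds hlim (key.mono fun n h => h.1) (key.mono fun n h => h.2)
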